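/- Let b : ℤ → ℝ and let X, Y : ℤ → ℝ both be solutions of the discrete Hill recurrence, with Y_k ≠ 0 for all k ∈ ℤ and h := X_1·Y_0 − X_0·Y_1 ≠ 0. Set f_k := X_k/Y_k. Then for every k ∈ ℤ the cross ratio satisfies B_k := ((f_{k−1} − f_{k+1})/(f_{k−1} − f_k))·((f_{k+2} − f_k)/(f_{k+2} − f_{k+1})) = b_k·b_{k+1} (all the denominators appearing are nonzero). -/

import Mathlib

/-!
The Wronskian `W_k = X_{k+1} Y_k − X_k Y_{k+1}` of two solutions of the Hill recurrence does not
depend on `k`, so `f_{k+1} − f_k = h / (Y_k Y_{k+1})`. Eliminating `C_{k+1}` with the recurrence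
gives `f_{k+1} − f_{k−1} = b_k h / (Y_{k−1} Y_{k+1})`. In the cross ratio all factors `h` cancel,
and so do the `Y`'s, leaving `b_k b_{k+1}`.
-/

namespace DiscreteHill

variable {R : Type*} [CommRing R] {b X Y : ℤ → R}

def wronskian (X Y : ℤ → R) (k : ℤ) : R := X (k + 1) * Y k - X k * Y (k + 1)

theorem wronskian_succ (hX : ∀ k, X (k + 1) = b k * X k - X (k - 1))
    (hY : ∀ k, Y (k + 1) = b k * Y k - Y (k - 1)) (k : ℤ) :
    wronskian X Y (k + 1) = wronskian X Y k := by
  unfold wronskian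
  rw [hX (k + 1), hY (k + 1), add_sub_cancel_right]
  ring

theorem wronskian_eq_wronskian_zero (hX : ∀ k, X (k + 1) = b k * X k - X (k - 1))
    (hY : ∀ k, Y (k + 1) = b k * Y k - Y (k - 1)) (k : ℤ) :
    wronskian X Y k = wronskian X Y 0 := by
  induction k using Int.induction_on with
  | zero => rfl
  | succ n ih => rw [wronskian_succ hX hY, ih]
  | pred n ih => rw [← ih, ← wronskian_succ hX hY, sub_add_cancel]

theorem cross_wronskian_two_step (hX : ∀ k, X (k + 1) = b k * X k - X (k - 1))
    (hY : ∀ k, Y (k + 1) = b k * Y k - Y (k - 1)) (k : ℤ) :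
    X (k + 1) * Y (k - 1) - X (k - 1) * Y (k + 1) = b k * wronskian X Y (k - 1) := by
  rw [wronskian, sub_add_cancel, hX, hY]
  ring

section Field

variable {K : Type*} [Field K] {b X Y : ℤ → K} {k : ℤ}

theorem div_succ_sub_div (hk : Y k ≠ 0) (hk₁ : Y (k + 1) ≠ 0) :
    X (k + 1) / Y (k + 1) - X k / Y k = wronskian X Y k / (Y k * Y (k + 1)) := by
  rw [div_sub_div _ _ hk₁ hk, wronskian]
  ring

theorem div_succ_sub_div_pred (hX : ∀ k, X (k + 1) = b k * X k - X (k - 1))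
    (hY : ∀ k, Y (k + 1) = b k * Y k - Y (k - 1)) (hk : Y (k - 1) ≠ 0) (hk₁ : Y (k + 1) ≠ 0) :
    X (k + 1) / Y (k + 1) - X (k - 1) / Y (k - 1) =
      b k * wronskian X Y (k - 1) / (Y (k - 1) * Y (k + 1)) := by
  rw [div_sub_div _ _ hk₁ hk, ← cross_wronskian_two_step hX hY]
  ring

end Field

end DiscreteHill

open DiscreteHill

theorem discrete_hill_cross_ratio (b X Y : ℤ → ℝ)
    (hX : ∀ k : ℤ, X (k + 1) = b k * X k - X (k - 1))
    (hY : ∀ k : ℤ, Y (k + 1) = b k * Y k - Y (k - 1))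
    (hY0 : ∀ k : ℤ, Y k ≠ 0)
    (hh : X 1 * Y 0 - X 0 * Y 1 ≠ 0) :
    ∀ k : ℤ,
      X (k - 1) / Y (k - 1) - X k / Y k ≠ 0 ∧
      X (k + 2) / Y (k + 2) - X (k + 1) / Y (k + 1) ≠ 0 ∧
      ((X (k - 1) / Y (k - 1) - X (k + 1) / Y (k + 1)) /
          (X (k - 1) / Y (k - 1) - X k / Y k)) *
        ((X (k + 2) / Y (k + 2) - X k / Y k) /
          (X (k + 2) / Y (k + 2) - X (k + 1) / Y (k + 1))) = b k * b (k + 1) := by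
  intro k
  set h := wronskian X Y 0
  have hW (j : ℤ) : wronskian X Y j = h := wronskian_eq_wronskian_zero hX hY j
  have hh₀ : h ≠ 0 := by simpa [h, wronskian] using hh
  have d₀ : X (k - 1) / Y (k - 1) - X k / Y k = -(h / (Y (k - 1) * Y k)) := by
    have := div_succ_sub_div (X := X) (hY0 (k - 1)) (hY0 (k - 1 + 1))
    rw [sub_add_cancel, hW] at this
    rw [← this, neg_sub]
  have d₂ : X (k + 2) / Y (k + 2) - X (k + 1) / Y (k + 1) = h / (Y (k + 1) * Y (k + 2)) := by
    have := div_succ_sub_div (X := X) (hY0 (k + 1)) (hY0 (k + 1 + 1))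
    rwa [add_assoc, one_add_one_eq_two, hW] at this
  have e₁ : X (k - 1) / Y (k - 1) - X (k + 1) / Y (k + 1) =
      -(b k * h / (Y (k - 1) * Y (k + 1))) := by
    rw [← hW (k - 1), ← div_succ_sub_div_pred hX hY (hY0 _) (hY0 _), neg_sub]
  have e₂ : X (k + 2) / Y (k + 2) - X k / Y k = b (k + 1) * h / (Y k * Y (k + 2)) := by
    have := div_succ_sub_div_pred hX hY (hY0 (k + 1 - 1)) (hY0 (k + 1 + 1))
    rwa [add_sub_cancel_right, add_assoc, one_add_one_eq_two, hW] at this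
  have hY₀ := hY0 (k - 1)
  have hY₁ := hY0 k
  have hY₂ := hY0 (k + 1)
  have hY₃ := hY0 (k + 2)
  refine ⟨?_, ?_, ?_⟩
  · rw [d₀]; simp [hh₀, hY₀, hY₁]
  · rw [d₂]; simp [hh₀, hY₂, hY₃]
  · rw [d₀, d₂, e₁, e₂]
    field_simp
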